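/- For the partially depolarizing channel with noise parameter q ∈ [0,1], the SWITCH output with control |+⟩ applied to input ρ equals (1−q)²[½(|0⟩⟨0|+|1⟩⟨1|) ⊗ I/d + ½(|0⟩⟨1|+|1⟩⟨0|) ⊗ ρ/d²] + 2q(1−q)(|+⟩⟨+| ⊗ I/d) + q²(|+⟩⟨+| ⊗ ρ). -/

import Mathlib

open Matrix Kronecker BigOperators
open scoped ComplexOrder

/-- Kraus operators of the partially depolarizing channel
`N_q(ρ) = q ρ + (1-q) Tr(ρ) I/d`, built from a unitary orthonormal basis `U`. -/
noncomputable def depolKraus (d : ℕ) (q : ℝ)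
    (U : Fin (d ^ 2) → Matrix (Fin d) (Fin d) ℂ) :
    Option (Fin (d ^ 2)) → Matrix (Fin d) (Fin d) ℂ :=
  fun o => o.elim (((Real.sqrt q : ℝ) : ℂ) • (1 : Matrix (Fin d) (Fin d) ℂ))
    (fun i => ((Real.sqrt (1 - q) / (d : ℝ) : ℝ) : ℂ) • U i)

/-- The projector `|+⟩⟨+|` on the control qubit. -/
noncomputable def plusProj : Matrix (Fin 2) (Fin 2) ℂ :=
  (1 / 2 : ℂ) • (Matrix.single (0 : Fin 2) 0 (1 : ℂ)
    + Matrix.single (0 : Fin 2) 1 (1 : ℂ)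
    + Matrix.single (1 : Fin 2) 0 (1 : ℂ)
    + Matrix.single (1 : Fin 2) 1 (1 : ℂ))


/-!
In the control basis, the SWITCH output has diagonal blocks `½ ∑ KᵢKⱼ ρ (KᵢKⱼ)† = ½ N(N(ρ))`
and off-diagonal blocks `½ ∑ KᵢKⱼ ρ (KⱼKᵢ)†`. Orthonormality of the `d²` matrices `Uᵢ` makes the
square matrix of their entries `√d` times a unitary, so its rows are orthogonal as well; this
completeness relation gives `∑ Uᵢ X Uᵢ† = d Tr(X) I`, i.e. the Kraus family realises `N_q`, and
`∑ Tr(Uᵢ X) Uᵢ† = d X`. The off-diagonal block is `∑ⱼ N(Kⱼ ρ) Kⱼ†`, which these two identities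
evaluate to `(q² + (1-q)²/d²) ρ + 2q(1-q)/d · I` when `Tr ρ = 1`.
-/

section UnitaryBasis

variable {d : ℕ} {U : Fin (d ^ 2) → Matrix (Fin d) (Fin d) ℂ}

theorem sum_mul_star_eq_of_trace_orthogonal (hd : 0 < d)
    (hortho : ∀ i j, ((U i)ᴴ * (U j)).trace = if i = j then (d : ℂ) else 0)
    (p a r b : Fin d) :
    ∑ i, U i p a * star (U i r b) = if p = r ∧ a = b then (d : ℂ) else 0 := by
  have hd' : (d : ℂ) ≠ 0 := by exact_mod_cast hd.ne'
  let M : Matrix (Fin d × Fin d) (Fin (d ^ 2)) ℂ := of fun x i => U i x.1 x.2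
  have hMM : Mᴴ * M = (d : ℂ) • 1 := by
    ext i j
    rw [Matrix.smul_apply, one_apply, smul_eq_mul, mul_ite, mul_one, mul_zero, ← hortho, trace,
      mul_apply, Fintype.sum_prod_type, Finset.sum_comm]
    simp [M, mul_apply]
  have hMM' : M * Mᴴ = (d : ℂ) • 1 := by
    have e : Fin (d ^ 2) ≃ Fin d × Fin d := Fintype.equivOfCardEq (by simp [sq])
    have hinv : ((d : ℂ)⁻¹ • Mᴴ) * M = 1 := by
      rw [Matrix.smul_mul, hMM, smul_smul, inv_mul_cancel₀ hd', one_smul]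
    calc M * Mᴴ = (d : ℂ) • (M * ((d : ℂ)⁻¹ • Mᴴ)) := by
          rw [Matrix.mul_smul, smul_smul, mul_inv_cancel₀ hd', one_smul]
      _ = (d : ℂ) • 1 := by rw [(mul_eq_one_comm_of_equiv e).mp hinv]
  have hentry := congrFun (congrFun hMM' (p, a)) (r, b)
  rw [mul_apply, Matrix.smul_apply, one_apply] at hentry
  simpa [M] using hentry

theorem sum_mul_mul_conjTranspose_of_trace_orthogonal (hd : 0 < d)
    (hortho : ∀ i j, ((U i)ᴴ * (U j)).trace = if i = j then (d : ℂ) else 0)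
    (X : Matrix (Fin d) (Fin d) ℂ) :
    ∑ i, U i * X * (U i)ᴴ = ((d : ℂ) * X.trace) • 1 := by
  ext p r
  have h : (∑ i, U i * X * (U i)ᴴ : Matrix (Fin d) (Fin d) ℂ) p r
      = ∑ b, ∑ a, X a b * ∑ i, U i p a * star (U i r b) := by
    simp only [Matrix.sum_apply, mul_apply, conjTranspose_apply, Finset.sum_mul, Finset.mul_sum]
    rw [Finset.sum_comm]
    refine Finset.sum_congr rfl fun b _ => ?_
    rw [Finset.sum_comm]
    exact Finset.sum_congr rfl fun a _ => Finset.sum_congr rfl fun i _ => by ring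
  rw [h]
  simp only [sum_mul_star_eq_of_trace_orthogonal hd hortho]
  by_cases hpr : p = r <;> simp [hpr, trace, Finset.mul_sum, mul_comm]

theorem sum_trace_mul_smul_conjTranspose_of_trace_orthogonal (hd : 0 < d)
    (hortho : ∀ i j, ((U i)ᴴ * (U j)).trace = if i = j then (d : ℂ) else 0)
    (X : Matrix (Fin d) (Fin d) ℂ) :
    ∑ i, (U i * X).trace • (U i)ᴴ = (d : ℂ) • X := by
  ext p r
  have h : (∑ i, (U i * X).trace • (U i)ᴴ) p r
      = ∑ k, ∑ l, X l k * ∑ i, U i k l * star (U i r p) := by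
    simp only [Matrix.sum_apply, Matrix.smul_apply, trace, diag, mul_apply, conjTranspose_apply,
      Finset.sum_mul, Finset.mul_sum, smul_eq_mul]
    rw [Finset.sum_comm]
    refine Finset.sum_congr rfl fun k _ => ?_
    rw [Finset.sum_comm]
    exact Finset.sum_congr rfl fun l _ => Finset.sum_congr rfl fun i _ => by ring
  rw [h]
  simp only [sum_mul_star_eq_of_trace_orthogonal hd hortho]
  simp [ite_and, mul_comm]

end UnitaryBasis

section SmulConj

variable {n α : Type*} [Fintype n] [CommSemiring α] [StarRing α]

theorem smul_mul_mul_conjTranspose_smul (c : α) (A X : Matrix n n α) :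
    c • A * X * (c • A)ᴴ = (c * star c) • (A * X * Aᴴ) := by
  rw [conjTranspose_smul, Matrix.smul_mul, Matrix.smul_mul, Matrix.mul_smul, smul_smul]

theorem trace_smul_mul_smul_conjTranspose_smul (c : α) (A X : Matrix n n α) :
    (c • A * X).trace • (c • A)ᴴ = (c * star c) • ((A * X).trace • Aᴴ) := by
  rw [conjTranspose_smul, Matrix.smul_mul, trace_smul, smul_smul, smul_smul, smul_eq_mul,
    mul_right_comm]

end SmulConj

theorem ofReal_mul_star_ofReal (x : ℝ) : (x : ℂ) * star (x : ℂ) = ((x * x : ℝ) : ℂ) := by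
  rw [Complex.star_def, Complex.conj_ofReal, Complex.ofReal_mul]

section Depolarizing

variable {d : ℕ} {q : ℝ} {U : Fin (d ^ 2) → Matrix (Fin d) (Fin d) ℂ}

theorem sum_depolKraus_mul_mul_conjTranspose (hd : 0 < d) (hq0 : 0 ≤ q) (hq1 : q ≤ 1)
    (hortho : ∀ i j, ((U i)ᴴ * (U j)).trace = if i = j then (d : ℂ) else 0)
    (X : Matrix (Fin d) (Fin d) ℂ) :
    ∑ k, depolKraus d q U k * X * (depolKraus d q U k)ᴴ
      = (q : ℂ) • X + ((1 - q) / d * X.trace : ℂ) • 1 := by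
  simp only [Fintype.sum_option, depolKraus, Option.elim, smul_mul_mul_conjTranspose_smul,
    ofReal_mul_star_ofReal, ← Finset.smul_sum,
    sum_mul_mul_conjTranspose_of_trace_orthogonal hd hortho, one_mul, mul_one, conjTranspose_one]
  rw [Real.mul_self_sqrt hq0, div_mul_div_comm, Real.mul_self_sqrt (sub_nonneg.2 hq1)]
  have hd' : (d : ℂ) ≠ 0 := by exact_mod_cast hd.ne'
  match_scalars <;> field_simp

theorem sum_trace_depolKraus_mul_smul_conjTranspose (hd : 0 < d) (hq0 : 0 ≤ q) (hq1 : q ≤ 1)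
    (hortho : ∀ i j, ((U i)ᴴ * (U j)).trace = if i = j then (d : ℂ) else 0)
    (X : Matrix (Fin d) (Fin d) ℂ) :
    ∑ k, (depolKraus d q U k * X).trace • (depolKraus d q U k)ᴴ
      = ((q : ℂ) * X.trace) • 1 + ((1 - q) / d : ℂ) • X := by
  simp only [Fintype.sum_option, depolKraus, Option.elim, trace_smul_mul_smul_conjTranspose_smul,
    ofReal_mul_star_ofReal, ← Finset.smul_sum,
    sum_trace_mul_smul_conjTranspose_of_trace_orthogonal hd hortho, one_mul, conjTranspose_one]
  rw [Real.mul_self_sqrt hq0, div_mul_div_comm, Real.mul_self_sqrt (sub_nonneg.2 hq1)]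
  have hd' : (d : ℂ) ≠ 0 := by exact_mod_cast hd.ne'
  match_scalars <;> field_simp

end Depolarizing

section KrausFamily

variable {d : ℕ} {ι : Type*} [Fintype ι] {K : ι → Matrix (Fin d) (Fin d) ℂ} {q : ℂ}

theorem sum_kraus_comp_of_depolarizing (hd : 0 < d)
    (hK : ∀ X, ∑ k, K k * X * (K k)ᴴ = q • X + ((1 - q) / d * X.trace) • 1)
    (ρ : Matrix (Fin d) (Fin d) ℂ) :
    ∑ i, ∑ j, K i * K j * ρ * (K i * K j)ᴴ = q ^ 2 • ρ + ((1 - q ^ 2) / d * ρ.trace) • 1 := by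
  have hd' : (d : ℂ) ≠ 0 := by exact_mod_cast hd.ne'
  calc ∑ i, ∑ j, K i * K j * ρ * (K i * K j)ᴴ
      = ∑ i, K i * (∑ j, K j * ρ * (K j)ᴴ) * (K i)ᴴ := by
        simp only [conjTranspose_mul, Finset.mul_sum, Finset.sum_mul, Matrix.mul_assoc]
    _ = _ := by
        rw [hK ρ, hK, trace_add, trace_smul, trace_smul, trace_one, Fintype.card_fin,
          smul_eq_mul, smul_eq_mul]
        match_scalars <;> field_simp
        ring

theorem sum_kraus_swap_of_depolarizing
    (hK : ∀ X, ∑ k, K k * X * (K k)ᴴ = q • X + ((1 - q) / d * X.trace) • 1)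
    (hKtr : ∀ X, ∑ k, (K k * X).trace • (K k)ᴴ = (q * X.trace) • 1 + ((1 - q) / d) • X)
    (ρ : Matrix (Fin d) (Fin d) ℂ) :
    ∑ i, ∑ j, K i * K j * ρ * (K j * K i)ᴴ
      = (q ^ 2 + (1 - q) ^ 2 / d ^ 2) • ρ + (2 * q * (1 - q) / d * ρ.trace) • 1 := by
  calc ∑ i, ∑ j, K i * K j * ρ * (K j * K i)ᴴ
      = ∑ j, (∑ i, K i * (K j * ρ) * (K i)ᴴ) * (K j)ᴴ := by
        rw [Finset.sum_comm]
        simp only [conjTranspose_mul, Finset.sum_mul, Matrix.mul_assoc]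
    _ = ∑ j, (q • (K j * ρ) + ((1 - q) / d * (K j * ρ).trace) • 1) * (K j)ᴴ :=
        Finset.sum_congr rfl fun j _ => by rw [hK]
    _ = q • ∑ j, K j * ρ * (K j)ᴴ + ((1 - q) / d) • ∑ j, (K j * ρ).trace • (K j)ᴴ := by
        simp only [Matrix.add_mul, Matrix.smul_mul, Matrix.one_mul, Finset.sum_add_distrib,
          Finset.smul_sum, mul_smul]
    _ = _ := by
        rw [hK, hKtr]
        match_scalars <;> ring

end KrausFamily

theorem sum_kronecker {ι l m n p α : Type*} [CommSemiring α] (s : Finset ι) (A : ι → Matrix l m α)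
    (B : Matrix n p α) : (∑ i ∈ s, A i) ⊗ₖ B = ∑ i ∈ s, A i ⊗ₖ B :=
  map_sum ((kroneckerBilinear (R := α) (α := α) (l := l) (m := m)).flip B) A s

section Switch

variable {α : Type*} [CommRing α] [StarRing α]

theorem switch_mul_kronecker_mul_conjTranspose {n : Type*} [Fintype n] (A B ρ : Matrix n n α)
    (P : Matrix (Fin 2) (Fin 2) α) :
    (A ⊗ₖ single (0 : Fin 2) 0 (1 : α) + B ⊗ₖ single (1 : Fin 2) 1 (1 : α)) * (ρ ⊗ₖ P)
        * (A ⊗ₖ single (0 : Fin 2) 0 (1 : α) + B ⊗ₖ single (1 : Fin 2) 1 (1 : α))ᴴ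
      = P 0 0 • ((A * ρ * Aᴴ) ⊗ₖ single 0 0 1) + P 0 1 • ((A * ρ * Bᴴ) ⊗ₖ single 0 1 1)
        + P 1 0 • ((B * ρ * Aᴴ) ⊗ₖ single 1 0 1) + P 1 1 • ((B * ρ * Bᴴ) ⊗ₖ single 1 1 1) := by
  simp only [conjTranspose_add, conjTranspose_kronecker, conjTranspose_single, star_one,
    Matrix.add_mul, Matrix.mul_add, ← mul_kronecker_mul, single_mul_mul_single, one_mul, mul_one]
  simp only [← kronecker_smul, smul_single, smul_eq_mul, mul_one]
  abel

theorem sum_switch_mul_kronecker_mul_conjTranspose {ι n : Type*} [Fintype ι] [Fintype n]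
    (K : ι → Matrix n n α) (ρ : Matrix n n α) (P : Matrix (Fin 2) (Fin 2) α) :
    ∑ i, ∑ j,
        ((K i * K j) ⊗ₖ single (0 : Fin 2) 0 (1 : α) + (K j * K i) ⊗ₖ single (1 : Fin 2) 1 (1 : α))
        * (ρ ⊗ₖ P)
        * ((K i * K j) ⊗ₖ single (0 : Fin 2) 0 (1 : α)
          + (K j * K i) ⊗ₖ single (1 : Fin 2) 1 (1 : α))ᴴ
      = P 0 0 • ((∑ i, ∑ j, K i * K j * ρ * (K i * K j)ᴴ) ⊗ₖ single 0 0 1)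
        + P 0 1 • ((∑ i, ∑ j, K i * K j * ρ * (K j * K i)ᴴ) ⊗ₖ single 0 1 1)
        + P 1 0 • ((∑ i, ∑ j, K i * K j * ρ * (K j * K i)ᴴ) ⊗ₖ single 1 0 1)
        + P 1 1 • ((∑ i, ∑ j, K i * K j * ρ * (K i * K j)ᴴ) ⊗ₖ single 1 1 1) := by
  simp only [switch_mul_kronecker_mul_conjTranspose, Finset.sum_add_distrib, ← Finset.smul_sum,
    ← sum_kronecker]
  rw [Finset.sum_comm (f := fun i j => K j * K i * ρ * (K i * K j)ᴴ),
    Finset.sum_comm (f := fun i j => K j * K i * ρ * (K j * K i)ᴴ)]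

end Switch

theorem plusProj_apply (a b : Fin 2) : plusProj a b = 1 / 2 := by
  fin_cases a <;> fin_cases b <;> simp [plusProj]

theorem switch_of_partially_depolarizing_general (d : ℕ) (hd : 1 ≤ d)
    (q : ℝ) (hq0 : 0 ≤ q) (hq1 : q ≤ 1)
    (U : Fin (d ^ 2) → Matrix (Fin d) (Fin d) ℂ)
    (hortho : ∀ i j, ((U i)ᴴ * (U j)).trace = if i = j then (d : ℂ) else 0)
    (ρ : Matrix (Fin d) (Fin d) ℂ) (htr : ρ.trace = 1) :
    ∑ i : Option (Fin (d ^ 2)), ∑ j : Option (Fin (d ^ 2)),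
      ((depolKraus d q U i * depolKraus d q U j)
          ⊗ₖ Matrix.single (0 : Fin 2) 0 (1 : ℂ)
        + (depolKraus d q U j * depolKraus d q U i)
          ⊗ₖ Matrix.single (1 : Fin 2) 1 (1 : ℂ))
      * (ρ ⊗ₖ plusProj)
      * ((depolKraus d q U i * depolKraus d q U j)
          ⊗ₖ Matrix.single (0 : Fin 2) 0 (1 : ℂ)
        + (depolKraus d q U j * depolKraus d q U i)
          ⊗ₖ Matrix.single (1 : Fin 2) 1 (1 : ℂ))ᴴ
    = (((1 - q) ^ 2 : ℝ) : ℂ) •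
        ((2 * (d : ℂ))⁻¹ • ((1 : Matrix (Fin d) (Fin d) ℂ) ⊗ₖ
            (Matrix.single (0 : Fin 2) 0 (1 : ℂ)
              + Matrix.single (1 : Fin 2) 1 (1 : ℂ)))
          + (2 * (d : ℂ) ^ 2)⁻¹ • (ρ ⊗ₖ
            (Matrix.single (0 : Fin 2) 1 (1 : ℂ)
              + Matrix.single (1 : Fin 2) 0 (1 : ℂ))))
      + ((2 * q * (1 - q) : ℝ) : ℂ) •
          (((d : ℂ)⁻¹ • (1 : Matrix (Fin d) (Fin d) ℂ)) ⊗ₖ plusProj)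
      + ((q ^ 2 : ℝ) : ℂ) • (ρ ⊗ₖ plusProj) := by
  have hK := sum_depolKraus_mul_mul_conjTranspose hd hq0 hq1 hortho
  have hKtr := sum_trace_depolKraus_mul_smul_conjTranspose hd hq0 hq1 hortho
  have hd' : (d : ℂ) ≠ 0 := Nat.cast_ne_zero.mpr (by omega)
  rw [sum_switch_mul_kronecker_mul_conjTranspose, sum_kraus_comp_of_depolarizing hd hK,
    sum_kraus_swap_of_depolarizing hK hKtr, htr]
  simp only [plusProj_apply]
  simp only [plusProj, add_kronecker, kronecker_add, smul_kronecker, kronecker_smul, smul_add,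
    smul_smul]
  push_cast
  match_scalars <;> field_simp <;> ring

theorem switch_of_partially_depolarizing (d : ℕ) (hd : 1 ≤ d)
    (q : ℝ) (hq0 : 0 ≤ q) (hq1 : q ≤ 1)
    (U : Fin (d ^ 2) → Matrix (Fin d) (Fin d) ℂ)
    (hU : ∀ i, (U i)ᴴ * U i = 1)
    (hortho : ∀ i j, ((U i)ᴴ * (U j)).trace = if i = j then (d : ℂ) else 0)
    (ρ : Matrix (Fin d) (Fin d) ℂ) (hρ : ρ.PosSemidef) (htr : ρ.trace = 1) :
    ∑ i : Option (Fin (d ^ 2)), ∑ j : Option (Fin (d ^ 2)),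
      ((depolKraus d q U i * depolKraus d q U j)
          ⊗ₖ Matrix.single (0 : Fin 2) 0 (1 : ℂ)
        + (depolKraus d q U j * depolKraus d q U i)
          ⊗ₖ Matrix.single (1 : Fin 2) 1 (1 : ℂ))
      * (ρ ⊗ₖ plusProj)
      * ((depolKraus d q U i * depolKraus d q U j)
          ⊗ₖ Matrix.single (0 : Fin 2) 0 (1 : ℂ)
        + (depolKraus d q U j * depolKraus d q U i)
          ⊗ₖ Matrix.single (1 : Fin 2) 1 (1 : ℂ))ᴴ
    = (((1 - q) ^ 2 : ℝ) : ℂ) •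
        ((2 * (d : ℂ))⁻¹ • ((1 : Matrix (Fin d) (Fin d) ℂ) ⊗ₖ
            (Matrix.single (0 : Fin 2) 0 (1 : ℂ)
              + Matrix.single (1 : Fin 2) 1 (1 : ℂ)))
          + (2 * (d : ℂ) ^ 2)⁻¹ • (ρ ⊗ₖ
            (Matrix.single (0 : Fin 2) 1 (1 : ℂ)
              + Matrix.single (1 : Fin 2) 0 (1 : ℂ))))
      + ((2 * q * (1 - q) : ℝ) : ℂ) •
          (((d : ℂ)⁻¹ • (1 : Matrix (Fin d) (Fin d) ℂ)) ⊗ₖ plusProj)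
      + ((q ^ 2 : ℝ) : ℂ) • (ρ ⊗ₖ plusProj) :=
  switch_of_partially_depolarizing_general d hd q hq0 hq1 U hortho ρ htr
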